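/- arXiv:0902.1650 — 2 statements merged into one kernel-verified Lean document; each statement's English description precedes it below -/
import Mathlib

section
/- The shifted Hankel determinant of the Catalan numbers satisfies det((C_{i+j+1})_{i,j=0}^{n-1}) = 1 for all n ≥ 1. -/
/-!
Let `J` be the symmetric tridiagonal operator on sequences `ℕ → ℤ` with `2` on the diagonal and
`1` off it, and let `L` be the lower unitriangular matrix whose `i`-th row is `Jⁱ e₀`. Since `J`
is self-adjoint for the pairing `∑ₖ f k * h k` of finitely supported sequences,
`(L Lᵀ)ᵢⱼ = ⟨Jⁱ e₀, Jʲ e₀⟩ = (J^(i+j) e₀)₀`, and the closed form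
`(Jⁱ e₀)ₖ = C(2i+1, i+k+1) - C(2i+1, i+k+2)` (a ballot number) gives `(Jⁱ e₀)₀ = C_(i+1)`.
Hence the Hankel matrix is `L Lᵀ`, of determinant `1`.
-/

open Finset

section JacobiStep

variable {R : Type*} [CommRing R]

def jacobiStep (f : ℕ → R) : ℕ → R
  | 0 => 2 * f 0 + f 1
  | k + 1 => f k + 2 * f (k + 1) + f (k + 2)

theorem sum_range_succ_jacobiStep_mul_sub (f h : ℕ → R) (N : ℕ) :
    ∑ k ∈ range (N + 1), (jacobiStep f k * h k - f k * jacobiStep h k) =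
      f (N + 1) * h N - f N * h (N + 1) := by
  induction N with
  | zero => simp only [zero_add, sum_range_one, jacobiStep]; ring
  | succ N ih => rw [sum_range_succ, ih]; simp only [jacobiStep]; ring

theorem sum_jacobiStep_mul_eq_sum_mul_jacobiStep {f h : ℕ → R} {N : ℕ} (hf : f N = 0)
    (hh : h N = 0) :
    ∑ k ∈ range N, jacobiStep f k * h k = ∑ k ∈ range N, f k * jacobiStep h k := by
  cases N with
  | zero => simp
  | succ N =>
    rw [← sub_eq_zero, ← sum_sub_distrib, sum_range_succ_jacobiStep_mul_sub, hf, hh]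
    ring

end JacobiStep

def ballot : ℕ → ℕ → ℤ
  | 0 => Pi.single 0 1
  | i + 1 => jacobiStep (ballot i)

theorem ballot_eq_zero_of_lt {i k : ℕ} (h : i < k) : ballot i k = 0 := by
  induction i generalizing k with
  | zero => exact Pi.single_eq_of_ne (by omega) 1
  | succ i ih =>
    obtain ⟨k, rfl⟩ : ∃ k', k = k' + 1 := ⟨k - 1, by omega⟩
    change ballot i k + 2 * ballot i (k + 1) + ballot i (k + 2) = 0
    rw [ih (by omega), ih (by omega), ih (by omega)]
    ring

theorem ballot_self (i : ℕ) : ballot i i = 1 := by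
  induction i with
  | zero => exact Pi.single_eq_same 0 1
  | succ i ih =>
    change ballot i i + 2 * ballot i (i + 1) + ballot i (i + 2) = 1
    rw [ih, ballot_eq_zero_of_lt (by omega), ballot_eq_zero_of_lt (by omega)]
    ring

theorem sum_ballot_mul_ballot_of_add_lt {i j N : ℕ} (h : i + j < N) :
    ∑ k ∈ range N, ballot i k * ballot j k = ballot (i + j) 0 := by
  induction i generalizing j with
  | zero =>
    rw [sum_eq_single_of_mem 0 (mem_range.2 (by omega)) fun k _ hk => ?_]
    · simp [ballot]
    · simp [ballot, Pi.single_eq_of_ne hk]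
  | succ i ih =>
    rw [ballot, sum_jacobiStep_mul_eq_sum_mul_jacobiStep
      (ballot_eq_zero_of_lt (k := N) (by omega)) (ballot_eq_zero_of_lt (k := N) (by omega)),
      show i + 1 + j = i + (j + 1) by ring]
    exact ih (j := j + 1) (by omega)

theorem choose_add_two (n m : ℕ) :
    (n + 2).choose (m + 2) = n.choose m + 2 * n.choose (m + 1) + n.choose (m + 2) := by
  rw [Nat.choose_succ_succ, Nat.choose_succ_succ, Nat.choose_succ_succ]
  ring

theorem ballot_eq_choose_sub_choose (i k : ℕ) :
    ballot i k = (2 * i + 1).choose (i + k + 1) - (2 * i + 1).choose (i + k + 2) := by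
  induction i generalizing k with
  | zero => rcases k with _ | k <;> simp [ballot, Nat.choose_eq_zero_of_lt]
  | succ i ih =>
    have expand (m : ℕ) : ((2 * (i + 1) + 1).choose (m + 2) : ℤ) = (2 * i + 1).choose m +
        2 * (2 * i + 1).choose (m + 1) + (2 * i + 1).choose (m + 2) := by
      rw [show 2 * (i + 1) + 1 = 2 * i + 1 + 2 by ring, choose_add_two]
      push_cast; ring
    rw [show i + 1 + k + 1 = i + k + 2 by ring, show i + 1 + k + 2 = i + k + 1 + 2 by ring,
      expand, expand]
    cases k with
    | zero =>
      -- the missing term `C(2i+1, i) - C(2i+1, i+1)` of the general case vanishes by symmetry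
      change 2 * ballot i 0 + ballot i 1 = _
      rw [ih, ih, Nat.choose_symm_half]
      ring_nf
    | succ k =>
      change ballot i k + 2 * ballot i (k + 1) + ballot i (k + 2) = _
      rw [ih, ih, ih]
      ring_nf

theorem ballot_zero_right (i : ℕ) : ballot i 0 = catalan (i + 1) := by
  have hcat : ((i + 2 : ℕ) : ℤ) * catalan (i + 1) = 2 * (2 * i + 1).choose (i + 1) := by
    rw [← Nat.cast_mul, succ_mul_catalan_eq_centralBinom, Nat.centralBinom_eq_two_mul_choose,
      show 2 * (i + 1) = 2 * i + 1 + 1 by ring, Nat.choose_succ_succ, Nat.choose_symm_half]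
    push_cast; ring
  have hsucc : ((2 * i + 1).choose (i + 2) : ℤ) * (i + 2) = (2 * i + 1).choose (i + 1) * i := by
    have := Nat.choose_succ_right_eq (2 * i + 1) (i + 1)
    rw [show 2 * i + 1 - (i + 1) = i by omega] at this
    exact_mod_cast this
  rw [ballot_eq_choose_sub_choose]
  refine mul_left_cancel₀ (show ((i + 2 : ℕ) : ℤ) ≠ 0 by positivity) ?_
  rw [hcat]
  push_cast
  linear_combination -hsucc

theorem sum_ballot_mul_ballot {i N : ℕ} (j : ℕ) (h : i < N) :
    ∑ k ∈ range N, ballot i k * ballot j k = catalan (i + j + 1) := by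
  rw [← ballot_zero_right, ← sum_ballot_mul_ballot_of_add_lt (N := N + j) (by omega),
    sum_range_add, left_eq_add]
  exact sum_eq_zero fun k _ => by rw [ballot_eq_zero_of_lt (by omega), zero_mul]

theorem stmt_9_general (n : ℕ) :
    Matrix.det (Matrix.of (fun i j : Fin n => (catalan (i.1 + j.1 + 1) : ℤ))) = 1 := by
  set L : Matrix (Fin n) (Fin n) ℤ := Matrix.of fun i k => ballot i k
  have hL : L.det = 1 := by
    rw [Matrix.det_of_isLowerTriangular L fun i k hik => ballot_eq_zero_of_lt hik]
    exact prod_eq_one fun i _ => ballot_self i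
  have hH : Matrix.of (fun i j : Fin n => (catalan (i.1 + j.1 + 1) : ℤ)) = L * L.transpose := by
    ext i j
    simp only [L, Matrix.mul_apply, Matrix.transpose_apply, Matrix.of_apply]
    rw [Fin.sum_univ_eq_sum_range (fun k => ballot i k * ballot j k), sum_ballot_mul_ballot j i.2]
  rw [hH, Matrix.det_mul, Matrix.det_transpose, hL, one_mul]

theorem stmt_9 (n : ℕ) (hn : 1 ≤ n) :
    Matrix.det (Matrix.of (fun i j : Fin n => (catalan (i.1 + j.1 + 1) : ℤ))) = 1 :=
  stmt_9_general n
end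

section
/- With c(n,a,b,q) = (b;q)_n/(a;q)_n and d(n,m) = det((c(i+j+m,a,b,q))_{i,j=0}^{n-1}), one has d(n,1) = q^{binom(n,2)} · (b;q)_n / (q^{n-1}a; q)_n · d(n,0), provided all q-Pochhammer denominators are nonzero and 1 - a ≠ 0. -/
/-- The q-Pochhammer symbol `(x; q)_n = ∏_{j=0}^{n-1} (1 - q^j x)`. -/
def qPoch {F : Type*} [Field F] (q x : F) (n : ℕ) : F :=
  ∏ j ∈ Finset.range n, (1 - q ^ j * x)

/-!
Put `N = n - 1`. For `j ≤ N`, completing the denominator to `(a;q)_{t+N}` gives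
`(b;q)_{t+j} / (a;q)_{t+j} = (b;q)_t / (a;q)_{t+N} · P_j(q^t)` with
`P_j(x) = (bx;q)_j (q^j a x;q)_{N-j}` of degree at most `N`. Hence the Hankel matrix
`(c(i+j+m))` is the Vandermonde matrix at the nodes `q^{i+m}`, with rows scaled by
`(b;q)_{i+m} / (a;q)_{i+m+N}`, times the coefficient matrix of the `P_j`, which does not
depend on `m`. Passing from `m = 0` to `m = 1` multiplies the nodes by `q`, so the Vandermonde
determinant by `q^{binom(n,2)}`, and the row factors telescope to `(b;q)_n / (q^N a;q)_n`.
-/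

open Polynomial Finset

theorem qPoch_zero {F : Type*} [Field F] (q x : F) : qPoch q x 0 = 1 :=
  prod_range_zero _

theorem qPoch_add {F : Type*} [Field F] (q x : F) (m k : ℕ) :
    qPoch q x (m + k) = qPoch q x m * qPoch q (q ^ m * x) k := by
  rw [qPoch, prod_range_add]
  congr 1
  exact prod_congr rfl fun j _ => by rw [pow_add]; ring

noncomputable def qPochPoly {F : Type*} [Field F] (q c : F) (k : ℕ) : F[X] :=
  ∏ j ∈ range k, (1 - C (q ^ j * c) * X)

theorem eval_qPochPoly {F : Type*} [Field F] (q c x : F) (k : ℕ) :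
    (qPochPoly q c k).eval x = qPoch q (x * c) k := by
  simp only [qPochPoly, qPoch, eval_prod, eval_sub, eval_one, eval_mul, eval_C, eval_X]
  exact prod_congr rfl fun j _ => by ring

theorem natDegree_qPochPoly_le {F : Type*} [Field F] (q c : F) (k : ℕ) :
    (qPochPoly q c k).natDegree ≤ k := by
  refine (natDegree_prod_le _ _).trans ?_
  refine (sum_le_card_nsmul _ _ 1 fun j _ => ?_).trans (by simp)
  exact (natDegree_sub_le _ _).trans
    (max_le (by simp) ((natDegree_C_mul_le _ _).trans natDegree_X_le))

noncomputable def hankelColumnPoly {F : Type*} [Field F] (q a b : F) (N j : ℕ) : F[X] :=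
  qPochPoly q b j * qPochPoly q (q ^ j * a) (N - j)

theorem natDegree_hankelColumnPoly_le {F : Type*} [Field F] (q a b : F) {N j : ℕ}
    (hj : j ≤ N) :
    (hankelColumnPoly q a b N j).natDegree ≤ N :=
  natDegree_mul_le.trans <| by
    have := natDegree_qPochPoly_le q b j
    have := natDegree_qPochPoly_le q (q ^ j * a) (N - j)
    omega

theorem qPoch_div_qPoch_eq_mul_eval {F : Type*} [Field F] {q a : F} (b : F)
    (ha : ∀ m, qPoch q a m ≠ 0) {N j : ℕ} (hj : j ≤ N) (t : ℕ) :
    qPoch q b (t + j) / qPoch q a (t + j) =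
      qPoch q b t / qPoch q a (t + N) * (hankelColumnPoly q a b N j).eval (q ^ t) := by
  have hsplit : qPoch q a (t + N) =
      qPoch q a (t + j) * qPoch q (q ^ t * (q ^ j * a)) (N - j) := by
    rw [← mul_assoc, ← pow_add, ← qPoch_add, add_assoc, Nat.add_sub_cancel' hj]
  have htail := right_ne_zero_of_mul (hsplit ▸ ha (t + N))
  rw [hankelColumnPoly, eval_mul, eval_qPochPoly, eval_qPochPoly, hsplit, qPoch_add,
    div_mul_eq_mul_div, ← mul_assoc, mul_div_mul_right _ _ htail]

namespace Matrix

variable {R : Type*} [CommRing R] {n : ℕ}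

theorem of_eval_eq_vandermonde_mul (v : Fin n → R) (p : Fin n → R[X])
    (hp : ∀ j, (p j).natDegree < n) :
    of (fun i j => (p j).eval (v i)) = vandermonde v * of (fun k j : Fin n => (p j).coeff k) := by
  ext i j
  rw [of_apply, eval_eq_sum_range' (hp j), mul_apply, ← Fin.sum_univ_eq_sum_range]
  exact Fintype.sum_congr _ _ fun k => by rw [vandermonde_apply, of_apply, mul_comm]

theorem det_of_mul_eval (r v : Fin n → R) (p : Fin n → R[X]) (hp : ∀ j, (p j).natDegree < n) :
    (of fun i j => r i * (p j).eval (v i)).det =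
      (∏ i, r i) * (vandermonde v).det * (of fun k j : Fin n => (p j).coeff k).det := by
  refine (det_mul_column r (of fun i j => (p j).eval (v i))).trans ?_
  rw [of_eval_eq_vandermonde_mul v p hp, det_mul, mul_assoc]

theorem det_vandermonde_const_mul (c : R) (v : Fin n → R) :
    (vandermonde fun i => c * v i).det = c ^ n.choose 2 * (vandermonde v).det := by
  have hdiag : vandermonde (fun i => c * v i) =
      vandermonde v * diagonal fun j : Fin n => c ^ (j : ℕ) := by
    ext i j
    simp [vandermonde_apply, mul_pow, mul_comm]
  rw [hdiag, det_mul, det_diagonal, prod_pow_eq_pow_sum, Fin.sum_univ_eq_sum_range (fun j => j),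
    sum_range_id, ← Nat.choose_two_right, mul_comm]

end Matrix

theorem prod_range_qPoch_div_qPoch_succ {F : Type*} [Field F] {q a : F} (b : F)
    (ha : ∀ m, qPoch q a m ≠ 0) (N n : ℕ) :
    ∏ i ∈ range n, qPoch q b (i + 1) / qPoch q a (i + 1 + N) =
      qPoch q b n / qPoch q (q ^ N * a) n * ∏ i ∈ range n, qPoch q b i / qPoch q a (i + N) := by
  have htele := (prod_range_succ' (fun i => qPoch q b i / qPoch q a (i + N)) n).symm.trans
    (prod_range_succ _ n)
  have hN := ha N
  have hNn : qPoch q a (N + n) ≠ 0 := ha (N + n)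
  rw [qPoch_add] at hNn
  have hshift := right_ne_zero_of_mul hNn
  rw [qPoch_zero, zero_add, add_comm n, qPoch_add] at htele
  field_simp at htele ⊢
  linear_combination htele

theorem stmt_13_general {F : Type*} [Field F] (q a b : F) (n : ℕ)
    (ha : ∀ m : ℕ, qPoch q a m ≠ 0)
    (d : ℕ → F)
    (hd : ∀ m : ℕ, d m = Matrix.det (Matrix.of (fun i j : Fin n =>
        qPoch q b (i.1 + j.1 + m) / qPoch q a (i.1 + j.1 + m)))) :
    d 1 = q ^ n.choose 2 * (qPoch q b n / qPoch q (q ^ (n - 1) * a) n) * d 0 := by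
  set P : Fin n → F[X] := fun j => hankelColumnPoly q a b (n - 1) j
  have hP : ∀ j, (P j).natDegree < n := fun j =>
    (natDegree_hankelColumnPoly_le q a b (Nat.le_sub_one_of_lt j.2)).trans_lt
      (Nat.sub_one_lt_of_lt j.2)
  have hdet : ∀ m, d m = (∏ i : Fin n, qPoch q b (i + m) / qPoch q a (i + m + (n - 1))) *
      (Matrix.vandermonde fun i : Fin n => q ^ m * q ^ (i : ℕ)).det *
      (Matrix.of fun k j : Fin n => (P j).coeff k).det := by
    intro m
    rw [hd, ← Matrix.det_of_mul_eval _ _ _ hP]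
    congr 1
    ext i j
    rw [Matrix.of_apply, Matrix.of_apply, add_right_comm,
      qPoch_div_qPoch_eq_mul_eval b ha (Nat.le_sub_one_of_lt j.2), ← pow_add, add_comm m]
  rw [hdet 1, hdet 0, Matrix.det_vandermonde_const_mul, Matrix.det_vandermonde_const_mul,
    Fin.prod_univ_eq_prod_range (fun i => qPoch q b (i + 1) / qPoch q a (i + 1 + (n - 1))),
    Fin.prod_univ_eq_prod_range (fun i => qPoch q b (i + 0) / qPoch q a (i + 0 + (n - 1))),
    prod_range_qPoch_div_qPoch_succ b ha]
  simp only [add_zero, pow_one, pow_zero, one_pow]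
  ring

theorem stmt_13 {F : Type*} [Field F] (q a b : F) (n : ℕ)
    (ha : ∀ m : ℕ, qPoch q a m ≠ 0)
    (hna : qPoch q (q ^ (n - 1) * a) n ≠ 0)
    (h1a : (1 : F) - a ≠ 0)
    (d : ℕ → F)
    (hd : ∀ m : ℕ, d m = Matrix.det (Matrix.of (fun i j : Fin n =>
        qPoch q b (i.1 + j.1 + m) / qPoch q a (i.1 + j.1 + m)))) :
    d 1 = q ^ n.choose 2 * (qPoch q b n / qPoch q (q ^ (n - 1) * a) n) * d 0 :=
  stmt_13_general q a b n ha d hd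
end
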